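/- Let q ∈ ℝᵏ be a probability vector with all entries positive and q_min := min_i q_i. The weighted normalized ℓ₁ distance d(x,y) := (Σ_i q_i|x_i−y_i|) / max{‖x‖∞,‖y‖∞} satisfies the ρ-relaxed triangle inequality with ρ = k/q_min²: for all x, y, z ∈ ℝᵏ, d(x,y) ≤ (k/q_min²)·(d(x,z) + d(z,y)). -/

import Mathlib

/-!
Write `d∞(x, y) = ‖x - y‖∞ / max ‖x‖∞ ‖y‖∞`. Since `q` is a probability vector with entries at
least `q_min`, we have `q_min · d∞ ≤ d ≤ d∞`. In every normed group `d∞` satisfies the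
`2`-relaxed triangle inequality, and on `ℝ` it is a genuine metric, so on `ℝᵏ` it is `k`-relaxed.
Hence `d(x, y) ≤ d∞(x, y) ≤ k (d∞(x, z) + d∞(z, y)) ≤ (k / q_min) (d(x, z) + d(z, y))`, and
`k / q_min ≤ k / q_min²` because `q_min ≤ 1`.
-/

open Finset

section NormedAddCommGroup

variable {E : Type*} [SeminormedAddCommGroup E]

-- `x / 0 = 0` gives `normalizedDist 0 0 = 0`, as in the paper.
noncomputable def normalizedDist (x y : E) : ℝ := ‖x - y‖ / max ‖x‖ ‖y‖

theorem normalizedDist_nonneg (x y : E) : 0 ≤ normalizedDist x y := by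
  unfold normalizedDist; positivity

theorem norm_sub_div_le_normalizedDist {x y : E} {M : ℝ} (h : max ‖x‖ ‖y‖ ≤ M) :
    ‖x - y‖ / M ≤ normalizedDist x y := by
  rcases (le_max_left ‖x‖ ‖y‖ |>.trans' (norm_nonneg x)).eq_or_lt with h0 | h0
  · have hxy : ‖x - y‖ = 0 := le_antisymm
      ((norm_sub_le x y).trans (by linarith [le_max_left ‖x‖ ‖y‖, le_max_right ‖x‖ ‖y‖]))
      (norm_nonneg _)
    simp [normalizedDist, hxy]
  · exact div_le_div_of_nonneg_left (norm_nonneg _) h0 h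

theorem normalizedDist_le_add_of_norm_le_max {x y z : E} (hz : ‖z‖ ≤ max ‖x‖ ‖y‖) :
    normalizedDist x y ≤ normalizedDist x z + normalizedDist z y := by
  set M := max ‖x‖ ‖y‖
  calc normalizedDist x y ≤ (‖x - z‖ + ‖z - y‖) / M := by
        unfold normalizedDist; gcongr; exact norm_sub_le_norm_sub_add_norm_sub x z y
    _ = ‖x - z‖ / M + ‖z - y‖ / M := add_div _ _ _
    _ ≤ normalizedDist x z + normalizedDist z y := by
        gcongr
        · exact norm_sub_div_le_normalizedDist (max_le (le_max_left _ _) hz)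
        · exact norm_sub_div_le_normalizedDist (max_le hz (le_max_right _ _))

theorem normalizedDist_neg (x y : E) : normalizedDist (-x) (-y) = normalizedDist x y := by
  rw [normalizedDist, normalizedDist, neg_sub_neg, norm_sub_rev, norm_neg, norm_neg]

theorem normalizedDist_le_two (x y : E) : normalizedDist x y ≤ 2 :=
  div_le_of_le_mul₀ (by positivity) zero_le_two <| by
    linarith [norm_sub_le x y, le_max_left ‖x‖ ‖y‖, le_max_right ‖x‖ ‖y‖]

theorem normalizedDist_le_two_mul_add (x y z : E) :
    normalizedDist x y ≤ 2 * (normalizedDist x z + normalizedDist z y) := by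
  set M := max ‖x‖ ‖y‖
  have hx : ‖x‖ ≤ M := le_max_left _ _
  have hy : ‖y‖ ≤ M := le_max_right _ _
  rcases le_or_gt ‖z‖ M with hz | hz
  · linarith [normalizedDist_le_add_of_norm_le_max hz, normalizedDist_nonneg x z,
      normalizedDist_nonneg z y]
  have hz0 : 0 < ‖z‖ := (norm_nonneg x).trans_lt (hx.trans_lt hz)
  have hsum : normalizedDist x z + normalizedDist z y = (‖x - z‖ + ‖z - y‖) / ‖z‖ := by
    rw [normalizedDist, normalizedDist, max_eq_right (hx.trans hz.le),
      max_eq_left (hy.trans hz.le), add_div]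
  rw [hsum]
  rcases le_total ‖z‖ (2 * M) with hz2 | hz2
  · calc normalizedDist x y ≤ (‖x - z‖ + ‖z - y‖) / M := by
          unfold normalizedDist; gcongr; exact norm_sub_le_norm_sub_add_norm_sub x z y
      _ = 2 * ((‖x - z‖ + ‖z - y‖) / (2 * M)) := by field_simp
      _ ≤ 2 * ((‖x - z‖ + ‖z - y‖) / ‖z‖) := by gcongr
  · -- `z` lies so far out that `d(x, z) + d(z, y) ≥ 1`, while `d(x, y) ≤ 2` always
    have : 1 ≤ (‖x - z‖ + ‖z - y‖) / ‖z‖ := by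
      rw [one_le_div hz0]
      linarith [norm_sub_norm_le z x, norm_sub_rev x z, norm_sub_norm_le z y]
    linarith [normalizedDist_le_two x y]

theorem Pi.norm_eq_norm_default {ι : Type*} [Fintype ι] [Unique ι] (v : ι → E) :
    ‖v‖ = ‖v default‖ :=
  le_antisymm
    ((pi_norm_le_iff_of_nonneg (norm_nonneg _)).mpr fun i => by rw [Unique.eq_default i])
    (norm_le_pi_norm v default)

theorem normalizedDist_pi_unique {ι : Type*} [Fintype ι] [Unique ι] (x y : ι → E) :
    normalizedDist x y = normalizedDist (x default) (y default) := by
  simp only [normalizedDist, Pi.norm_eq_norm_default, Pi.sub_apply]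

end NormedAddCommGroup

theorem Real.normalizedDist_triangle (a b c : ℝ) :
    normalizedDist a b ≤ normalizedDist a c + normalizedDist c b := by
  rcases le_or_gt ‖c‖ (max ‖a‖ ‖b‖) with hc | hc
  · exact normalizedDist_le_add_of_norm_le_max hc
  wlog hc0 : 0 ≤ c generalizing a b c
  · simpa only [normalizedDist_neg] using this (-a) (-b) (-c) (by simpa using hc) (by linarith)
  simp only [normalizedDist, Real.norm_eq_abs, abs_of_nonneg hc0] at hc ⊢
  obtain ⟨M, hM⟩ : ∃ M, max |a| |b| = M := ⟨_, rfl⟩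
  have haM : |a| ≤ M := hM ▸ le_max_left _ _
  have hbM : |b| ≤ M := hM ▸ le_max_right _ _
  obtain ⟨ha, ha'⟩ := abs_le.mp haM
  obtain ⟨hb, hb'⟩ := abs_le.mp hbM
  rw [hM] at hc ⊢
  rw [max_eq_right (by linarith), max_eq_left (by linarith), abs_sub_comm a c,
    abs_of_nonneg (by linarith : 0 ≤ c - a), abs_of_nonneg (by linarith : 0 ≤ c - b), ← add_div]
  rcases (abs_nonneg a).trans haM |>.eq_or_lt with hM0 | hM0
  · rw [← hM0, div_zero]; exact div_nonneg (by linarith) hc0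
  rw [div_le_div_iff₀ hM0 (by linarith)]
  have hab : |a - b| ≤ 2 * M - a - b := abs_sub_le_iff.mpr ⟨by linarith, by linarith⟩
  have hab' : |a - b| ≤ 2 * M := abs_sub_le_iff.mpr ⟨by linarith, by linarith⟩
  calc |a - b| * c = |a - b| * M + |a - b| * (c - M) := by ring
    _ ≤ (2 * M - a - b) * M + 2 * M * (c - M) := by gcongr
    _ = (c - a + (c - b)) * M := by ring

section Pi

variable {ι : Type*} [Fintype ι]

theorem normalizedDist_le_card_mul_add (x y z : ι → ℝ) :
    normalizedDist x y ≤ Fintype.card ι * (normalizedDist x z + normalizedDist z y) := by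
  obtain hι | hι | hι : Fintype.card ι = 0 ∨ Fintype.card ι = 1 ∨ 2 ≤ Fintype.card ι := by omega
  · have : IsEmpty ι := Fintype.card_eq_zero_iff.mp hι
    simp [Subsingleton.elim x y, normalizedDist]
  · obtain ⟨_⟩ := Fintype.card_eq_one_iff_nonempty_unique.mp hι
    rw [hι, Nat.cast_one, one_mul, normalizedDist_pi_unique x y, normalizedDist_pi_unique x z,
      normalizedDist_pi_unique z y]
    exact Real.normalizedDist_triangle (x default) (y default) (z default)
  · calc normalizedDist x y ≤ 2 * (normalizedDist x z + normalizedDist z y) :=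
          normalizedDist_le_two_mul_add x y z
      _ ≤ Fintype.card ι * (normalizedDist x z + normalizedDist z y) := by
          gcongr
          · exact add_nonneg (normalizedDist_nonneg x z) (normalizedDist_nonneg z y)
          · exact_mod_cast hι

noncomputable def weightedNormalizedDist (q x y : ι → ℝ) : ℝ :=
  (∑ i, q i * |x i - y i|) / max ‖x‖ ‖y‖

variable {q : ι → ℝ}

theorem weightedNormalizedDist_nonneg (hq0 : ∀ i, 0 ≤ q i) (x y : ι → ℝ) :
    0 ≤ weightedNormalizedDist q x y :=
  div_nonneg (sum_nonneg fun i _ => mul_nonneg (hq0 i) (abs_nonneg _)) (by positivity)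

theorem sum_mul_abs_le_norm (hq0 : ∀ i, 0 ≤ q i) (hq1 : ∑ i, q i = 1) (v : ι → ℝ) :
    ∑ i, q i * |v i| ≤ ‖v‖ :=
  calc ∑ i, q i * |v i| ≤ ∑ i, q i * ‖v‖ :=
        sum_le_sum fun i _ => mul_le_mul_of_nonneg_left (norm_le_pi_norm v i) (hq0 i)
    _ = ‖v‖ := by rw [← sum_mul, hq1, one_mul]

theorem mul_norm_le_sum_mul_abs {m : ℝ} (hm0 : 0 ≤ m) (hm : ∀ i, m ≤ q i) (v : ι → ℝ) :
    m * ‖v‖ ≤ ∑ i, q i * |v i| := by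
  have hterm : ∀ i, 0 ≤ q i * |v i| := fun i => mul_nonneg (hm0.trans (hm i)) (abs_nonneg _)
  rw [← Real.norm_of_nonneg hm0, ← norm_smul,
    pi_norm_le_iff_of_nonneg (sum_nonneg fun i _ => hterm i)]
  intro i
  rw [Pi.smul_apply, norm_smul, Real.norm_of_nonneg hm0, Real.norm_eq_abs]
  calc m * |v i| ≤ q i * |v i| := mul_le_mul_of_nonneg_right (hm i) (abs_nonneg _)
    _ ≤ ∑ j, q j * |v j| :=
        single_le_sum (f := fun j => q j * |v j|) (fun j _ => hterm j) (mem_univ i)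

theorem weightedNormalizedDist_le_normalizedDist (hq0 : ∀ i, 0 ≤ q i) (hq1 : ∑ i, q i = 1)
    (x y : ι → ℝ) : weightedNormalizedDist q x y ≤ normalizedDist x y :=
  div_le_div_of_nonneg_right (sum_mul_abs_le_norm hq0 hq1 (x - y)) (by positivity)

theorem normalizedDist_le_weightedNormalizedDist_div {m : ℝ} (hm0 : 0 < m) (hm : ∀ i, m ≤ q i)
    (x y : ι → ℝ) : normalizedDist x y ≤ weightedNormalizedDist q x y / m := by
  rw [le_div_iff₀' hm0, normalizedDist, mul_div_assoc']
  exact div_le_div_of_nonneg_right (mul_norm_le_sum_mul_abs hm0.le hm (x - y)) (by positivity)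

end Pi

theorem stmt6_general (k : ℕ) (q : Fin k → ℝ) (hq : ∀ i, 0 < q i)
    (hq1 : ∑ i, q i = 1) (qmin : ℝ) (hqmin : qmin = ⨅ i, q i) (x y z : Fin k → ℝ) :
    (∑ i, q i * |x i - y i|) / max ‖x‖ ‖y‖ ≤
      ((k : ℝ) / qmin ^ 2) *
        ((∑ i, q i * |x i - z i|) / max ‖x‖ ‖z‖ +
          (∑ i, q i * |z i - y i|) / max ‖z‖ ‖y‖) := by
  have hq0 : ∀ i, 0 ≤ q i := fun i => (hq i).le
  have : Nonempty (Fin k) := univ_nonempty_iff.mp (nonempty_of_sum_ne_zero (hq1 ▸ one_ne_zero))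
  obtain ⟨j, hj⟩ := exists_eq_ciInf_of_finite (f := q)
  have hqmin_le : ∀ i, qmin ≤ q i := fun i => hqmin ▸ ciInf_le (Finite.bddBelow_range q) i
  have hqmin_pos : 0 < qmin := hqmin ▸ hj ▸ hq j
  have hqmin_le_one : qmin ≤ 1 :=
    (hqmin_le j).trans (hq1 ▸ single_le_sum (fun i _ => hq0 i) (mem_univ j))
  change weightedNormalizedDist q x y ≤
    k / qmin ^ 2 * (weightedNormalizedDist q x z + weightedNormalizedDist q z y)
  have hW := add_nonneg (weightedNormalizedDist_nonneg hq0 x z)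
    (weightedNormalizedDist_nonneg hq0 z y)
  calc weightedNormalizedDist q x y ≤ normalizedDist x y :=
        weightedNormalizedDist_le_normalizedDist hq0 hq1 x y
    _ ≤ k * (normalizedDist x z + normalizedDist z y) := by
        simpa only [Fintype.card_fin] using normalizedDist_le_card_mul_add x y z
    _ ≤ k * (weightedNormalizedDist q x z / qmin + weightedNormalizedDist q z y / qmin) := by
        gcongr <;> exact normalizedDist_le_weightedNormalizedDist_div hqmin_pos hqmin_le _ _
    _ = k / qmin * (weightedNormalizedDist q x z + weightedNormalizedDist q z y) := by ring
    _ ≤ k / qmin ^ 2 * (weightedNormalizedDist q x z + weightedNormalizedDist q z y) := by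
        gcongr ?_ * _
        exact div_le_div_of_nonneg_left k.cast_nonneg (by positivity)
          (pow_le_of_le_one hqmin_pos.le hqmin_le_one two_ne_zero)

/-- For a probability vector `q` with positive entries and `q_min = min_i q_i`,
the weighted normalized ℓ₁ distance `d(x,y) = (Σ_i q_i|x_i−y_i|)/max{‖x‖∞,‖y‖∞}`
satisfies the `(k/q_min²)`-relaxed triangle inequality. -/
theorem stmt6 (k : ℕ) (hk : 0 < k) (q : Fin k → ℝ) (hq : ∀ i, 0 < q i)
    (hq1 : ∑ i, q i = 1) (qmin : ℝ) (hqmin : qmin = ⨅ i, q i) (x y z : Fin k → ℝ) :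
    (∑ i, q i * |x i - y i|) / max ‖x‖ ‖y‖ ≤
      ((k : ℝ) / qmin ^ 2) *
        ((∑ i, q i * |x i - z i|) / max ‖x‖ ‖z‖ +
          (∑ i, q i * |z i - y i|) / max ‖z‖ ‖y‖) :=
  stmt6_general k q hq hq1 qmin hqmin x y z
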